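/- arXiv:2007.09054 — 9 statements merged into one kernel-verified Lean document; each statement's English description precedes it below -/
import Mathlib

section
/- Every semifield is either a field or anti-negative (i.e., if some non-zero element has an additive inverse, then every element has an additive inverse). -/
/-- A semifield: commutative addition and multiplication, multiplication
distributes over addition, `0` is an additive identity and multiplicative zero,
and the nonzero elements form a group under multiplication. -/
class Semifield' (S : Type*) extends AddCommMonoid S, CommMonoidWithZero S where
  left_distrib : ∀ a b c : S, a * (b + c) = a * b + a * c
  exists_ne : ∃ a : S, a ≠ 0
  mul_inv_cancel : ∀ a : S, a ≠ 0 → ∃ b : S, a * b = 1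

/-- Every semifield is either a field or anti-negative: if some nonzero element
has an additive inverse, then every element has an additive inverse. -/
theorem semifield_dichotomy {S : Type*} [Semifield' S]
    (h : ∃ a : S, a ≠ 0 ∧ ∃ b : S, a + b = 0) :
    ∀ c : S, ∃ d : S, c + d = 0 := by
  obtain ⟨a, ha, b, hab⟩ := h
  obtain ⟨a', ha'⟩ := Semifield'.mul_inv_cancel a ha
  intro c
  refine ⟨c * a' * b, ?_⟩
  have : c + c * a' * b = c * a' * (a + b) := by
    rw [Semifield'.left_distrib]
    congr 1
    rw [mul_assoc, mul_comm a' a, ha', mul_one]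
  rw [this, hab, mul_zero]
end

section
/- Let K be a field and let V ⊆ M_n(K) be a non-trivial linear subspace which is a union of L-classes (where A L B iff A and B have the same row space). Then V contains a matrix of rank 1. -/
/-!
Pick `A ∈ V` with a nonzero row `A i`. Adding row `i` to another row `j` is left multiplication
by an invertible transvection, which preserves the row space, so the result lies in `V`;
subtracting `A` leaves the matrix whose only nonzero row is `A i` at position `j`, of rank one.
If there is no other row (`n = 1`), `A` itself is such a matrix.
-/

/-- The row space of a square matrix: the span of its rows. -/
def rowSpace {K : Type*} [Field K] {n : ℕ} (A : Matrix (Fin n) (Fin n) K) :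
    Submodule K (Fin n → K) :=
  Submodule.span K (Set.range A)

namespace Matrix

variable {K : Type*} [Field K] {n : ℕ}

theorem rowSpace_eq_range_vecMulLinear (A : Matrix (Fin n) (Fin n) K) :
    rowSpace A = LinearMap.range A.vecMulLinear :=
  (range_vecMulLinear A).symm

theorem rowSpace_mul_of_isUnit {E : Matrix (Fin n) (Fin n) K} (hE : IsUnit E)
    (A : Matrix (Fin n) (Fin n) K) : rowSpace (E * A) = rowSpace A := by
  have hcomp : (E * A).vecMulLinear = A.vecMulLinear ∘ₗ E.vecMulLinear :=
    LinearMap.ext fun v => (vecMul_vecMul v E A).symm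
  rw [rowSpace_eq_range_vecMulLinear, rowSpace_eq_range_vecMulLinear, hcomp,
    LinearMap.range_comp_of_range_eq_top]
  exact LinearMap.range_eq_top.mpr (vecMul_surjective_iff_isUnit.mpr hE)

theorem rank_eq_finrank_rowSpace (A : Matrix (Fin n) (Fin n) K) :
    A.rank = Module.finrank K (rowSpace A) :=
  A.rank_eq_finrank_span_row

theorem transvection_mul_eq_add_updateRow_zero {ι α R : Type*} [Fintype ι] [DecidableEq ι] [CommRing R]
    (i j : ι) (c : R) (A : Matrix ι α R) :
    transvection j i c * A = A + updateRow 0 j (c • A i) := by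
  ext k b
  rcases eq_or_ne k j with rfl | hk
  · simp
  · simp [transvection_mul_apply_of_ne (j := i) k b hk, hk]

theorem rowSpace_updateRow_zero (j : Fin n) (v : Fin n → K) :
    rowSpace (updateRow 0 j v) = K ∙ v := by
  apply le_antisymm
  · rw [rowSpace, Submodule.span_le]
    rintro _ ⟨k, rfl⟩
    rcases eq_or_ne k j with rfl | hk
    · simp [Submodule.mem_span_singleton_self]
    · rw [updateRow_ne hk]
      exact zero_mem _
  · rw [Submodule.span_singleton_le_iff_mem]
    exact Submodule.subset_span ⟨j, by simp⟩

theorem rank_updateRow_zero {j : Fin n} {v : Fin n → K} (hv : v ≠ 0) :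
    (updateRow 0 j v : Matrix (Fin n) (Fin n) K).rank = 1 := by
  rw [rank_eq_finrank_rowSpace, rowSpace_updateRow_zero, finrank_span_singleton hv]

end Matrix

open Matrix

theorem updateRow_zero_mem_of_ne {K : Type*} [Field K] {n : ℕ}
    {V : Submodule K (Matrix (Fin n) (Fin n) K)}
    (hL : ∀ A ∈ V, ∀ B : Matrix (Fin n) (Fin n) K, rowSpace B = rowSpace A → B ∈ V)
    {A : Matrix (Fin n) (Fin n) K} (hA : A ∈ V) {i j : Fin n} (hij : i ≠ j) :
    updateRow 0 j (A i) ∈ V := by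
  have hT : transvection j i 1 * A ∈ V :=
    hL A hA _ (rowSpace_mul_of_isUnit ((isUnit_iff_isUnit_det _).mpr (by simp [hij.symm])) A)
  simpa [transvection_mul_eq_add_updateRow_zero] using V.sub_mem hT hA

/-- A non-trivial linear subspace of `M_n(K)` which is a union of `L`-classes
contains a matrix of rank 1. -/
theorem subspace_union_of_L_classes_contains_rank_one
    {K : Type*} [Field K] {n : ℕ}
    (V : Submodule K (Matrix (Fin n) (Fin n) K)) (hV : V ≠ ⊥)
    (hL : ∀ A ∈ V, ∀ B : Matrix (Fin n) (Fin n) K,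
      rowSpace B = rowSpace A → B ∈ V) :
    ∃ A ∈ V, A.rank = 1 := by
  obtain ⟨A, hA, hA0⟩ := Submodule.exists_mem_ne_zero_of_ne_bot hV
  obtain ⟨i, hi⟩ : ∃ i, A i ≠ 0 := Function.ne_iff.mp hA0
  obtain ⟨j, hj⟩ : ∃ j, updateRow 0 j (A i) ∈ V := by
    by_cases hn : ∃ j, i ≠ j
    · obtain ⟨j, hij⟩ := hn
      exact ⟨j, updateRow_zero_mem_of_ne hL hA hij⟩
    · push Not at hn
      refine ⟨i, ?_⟩
      convert hA using 1
      ext k : 1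
      obtain rfl := hn k
      simp
  exact ⟨_, hj, rank_updateRow_zero hi⟩
end

section
/- Let n, k ≥ 2 and let K be a field in which every polynomial of degree exactly n has a root. Let B_1, …, B_n ∈ M_n(K) be matrices of rank k all having the same row space. Then there exist scalars λ_1, …, λ_n ∈ K, not all zero, such that the matrix λ_1B_1 + ⋯ + λ_nB_n has rank strictly less than k. -/
open Polynomial Module Matrix

section Pencil

variable {K ι : Type*} [Field K] [Fintype ι] [DecidableEq ι]

theorem Polynomial.degree_det_X_smul_add_C {P : Matrix ι ι K} (hP : P.det ≠ 0)
    (Q : Matrix ι ι K) :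
    (((X : K[X]) • P.map C + Q.map C).det).degree = Fintype.card ι :=
  degree_eq_of_le_of_coeff_ne_zero (degree_le_of_natDegree_le (natDegree_det_X_add_C_le P Q))
    (by rwa [coeff_det_X_add_C_card])

theorem Polynomial.eval_det_X_smul_add_C (P Q : Matrix ι ι K) (s : K) :
    (((X : K[X]) • P.map C + Q.map C).det).eval s = (s • P + Q).det := by
  rw [← coe_evalRingHom, RingHom.map_det]
  congr 1
  ext i j
  simp [mul_comm s]

theorem Matrix.exists_det_smul_add_smul_eq_zero
    (hK : ∀ p : K[X], p.degree = Fintype.card ι → ∃ x : K, p.eval x = 0)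
    (P Q : Matrix ι ι K) : ∃ a b : K, (a ≠ 0 ∨ b ≠ 0) ∧ (a • P + b • Q).det = 0 := by
  by_cases hP : P.det = 0
  · exact ⟨1, 0, .inl one_ne_zero, by simpa using hP⟩
  obtain ⟨s, hs⟩ := hK _ (degree_det_X_smul_add_C hP Q)
  exact ⟨s, 1, .inr one_ne_zero, by rwa [one_smul, ← eval_det_X_smul_add_C]⟩

end Pencil

theorem Submodule.exists_pair_linearIndependent_mod {K V : Type*} [Field K] [AddCommGroup V]
    [Module K V] (U : Submodule K V) (hU : 1 < finrank K (V ⧸ U)) :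
    ∃ u₁ u₂ : V, ∀ a b : K, a • u₁ + b • u₂ ∈ U → a = 0 ∧ b = 0 := by
  have : Nontrivial (V ⧸ U) := Module.nontrivial_of_finrank_pos (R := K) (by omega)
  obtain ⟨x, hx⟩ := exists_ne (0 : V ⧸ U)
  obtain ⟨y, hxy⟩ := exists_linearIndependent_pair_of_one_lt_finrank hU hx
  obtain ⟨u₁, rfl⟩ := U.mkQ_surjective x
  obtain ⟨u₂, rfl⟩ := U.mkQ_surjective y
  refine ⟨u₁, u₂, fun a b hab => LinearIndependent.pair_iff.mp hxy a b ?_⟩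
  rwa [← map_smul, ← map_smul, ← map_add, mkQ_apply, Quotient.mk_eq_zero]

namespace Matrix

variable {K m n ι : Type*} [Field K] [Fintype n]

theorem mulVec_eq_zero_iff_forall_dotProduct_eq_zero (A : Matrix m n K) (x : n → K) :
    A *ᵥ x = 0 ↔ ∀ w ∈ Submodule.span K (Set.range A), w ⬝ᵥ x = 0 := by
  change _ ↔ Submodule.span K (Set.range A) ≤ LinearMap.ker ((dotProductBilin K K).flip x)
  rw [Submodule.span_le]
  exact ⟨fun h _ ⟨i, hi⟩ => hi ▸ congrFun h i, fun h => funext fun i => h ⟨i, rfl⟩⟩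

theorem ker_mulVecLin_eq_of_rowSpace_eq {k : ℕ} {A B : Matrix (Fin k) (Fin k) K}
    (h : rowSpace A = rowSpace B) : LinearMap.ker A.mulVecLin = LinearMap.ker B.mulVecLin := by
  ext x
  simp only [LinearMap.mem_ker, mulVecLin_apply, mulVec_eq_zero_iff_forall_dotProduct_eq_zero]
  rw [← rowSpace, ← rowSpace, h]

theorem finrank_quotient_ker_mulVecLin (A : Matrix m n K) :
    finrank K ((n → K) ⧸ LinearMap.ker A.mulVecLin) = A.rank :=
  A.mulVecLin.quotKerEquivRange.finrank_eq

theorem rank_lt_finrank_quotient {S : Matrix m n K} {U : Submodule K (n → K)}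
    (hU : U ≤ LinearMap.ker S.mulVecLin) {v : n → K} (hvU : v ∉ U) (hv : S *ᵥ v = 0) :
    S.rank < finrank K ((n → K) ⧸ U) := by
  have hlt : finrank K U < finrank K (LinearMap.ker S.mulVecLin) :=
    Submodule.finrank_lt_finrank_of_lt (SetLike.lt_iff_le_and_exists.mpr ⟨hU, v, hv, hvU⟩)
  have hS := LinearMap.finrank_range_add_finrank_ker S.mulVecLin
  have hquot := U.finrank_quotient_add_finrank
  rw [rank]
  omega

theorem sum_smul_mulVec [Fintype ι] (B : ι → Matrix m n K) (lam : ι → K) (v : n → K) :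
    (∑ j, lam j • B j) *ᵥ v = lam ᵥ* of (fun j => B j *ᵥ v) := by
  simp only [sum_mulVec, smul_mulVec, vecMul_eq_sum]
  rfl

end Matrix

theorem LinearMap.exists_notMem_det_eq_zero {K V ι : Type*} [Field K] [AddCommGroup V]
    [Module K V] [Fintype ι] [DecidableEq ι]
    (hK : ∀ p : K[X], p.degree = Fintype.card ι → ∃ x : K, p.eval x = 0)
    (Φ : V →ₗ[K] Matrix ι ι K) (U : Submodule K V) (hU : 1 < finrank K (V ⧸ U)) :
    ∃ v ∉ U, (Φ v).det = 0 := by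
  obtain ⟨u₁, u₂, hu⟩ := U.exists_pair_linearIndependent_mod hU
  obtain ⟨a, b, hab, hdet⟩ := Matrix.exists_det_smul_add_smul_eq_zero hK (Φ u₁) (Φ u₂)
  refine ⟨a • u₁ + b • u₂, fun hmem => ?_, by rwa [map_add, map_smul, map_smul]⟩
  obtain ⟨rfl, rfl⟩ := hu a b hmem
  simp at hab

theorem Matrix.exists_sum_smul_mulVec_eq_zero {K ι n : Type*} [Field K] [Fintype ι]
    [DecidableEq ι] [Fintype n]
    (hK : ∀ p : K[X], p.degree = Fintype.card ι → ∃ x : K, p.eval x = 0)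
    (B : ι → Matrix ι n K) (U : Submodule K (n → K)) (hU : 1 < finrank K ((n → K) ⧸ U)) :
    ∃ lam : ι → K, lam ≠ 0 ∧ ∃ v ∉ U, (∑ j, lam j • B j) *ᵥ v = 0 := by
  let Φ : (n → K) →ₗ[K] Matrix ι ι K :=
    (ofLinearEquiv K).toLinearMap ∘ₗ LinearMap.pi fun j => (B j).mulVecLin
  obtain ⟨v, hvU, hv⟩ := Φ.exists_notMem_det_eq_zero hK U hU
  obtain ⟨lam, hlam, hlamv⟩ := exists_vecMul_eq_zero_iff.mpr hv
  exact ⟨lam, hlam, v, hvU, (sum_smul_mulVec B lam v).trans hlamv⟩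

/-- Over a field in which every polynomial of degree exactly `n` has a root,
given `n` matrices of rank `k ≥ 2` with a common row space, some non-trivial
linear combination has rank strictly less than `k`. -/
theorem exists_combination_smaller_rank
    {K : Type*} [Field K] {n k : ℕ} (hn : 2 ≤ n) (hk : 2 ≤ k)
    (hK : ∀ p : Polynomial K, p.degree = n → ∃ x : K, p.eval x = 0)
    (B : Fin n → Matrix (Fin n) (Fin n) K)
    (hrank : ∀ i, (B i).rank = k)
    (hrow : ∀ i j, rowSpace (B i) = rowSpace (B j)) :
    ∃ lam : Fin n → K, lam ≠ 0 ∧ (∑ i, lam i • B i).rank < k := by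
  let i₀ : Fin n := ⟨0, by omega⟩
  set U := LinearMap.ker (B i₀).mulVecLin
  have hquot : finrank K ((Fin n → K) ⧸ U) = k :=
    (finrank_quotient_ker_mulVecLin _).trans (hrank i₀)
  obtain ⟨lam, hlam, v, hvU, hv⟩ :=
    exists_sum_smul_mulVec_eq_zero (fun p hp => hK p (by simpa using hp)) B U (by omega)
  have hUker : U ≤ LinearMap.ker (∑ i, lam i • B i).mulVecLin := by
    intro x hx
    have hBx : ∀ i, B i *ᵥ x = 0 := fun i =>
      (ker_mulVecLin_eq_of_rowSpace_eq (hrow i₀ i)).le hx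
    simp [hBx]
  exact ⟨lam, hlam, hquot ▸ rank_lt_finrank_quotient hUker hvU hv⟩
end

section
/- Let K be a field, n ≥ 2, and let u, v ∈ Kⁿ be linearly independent. For i = 1, …, n−1 let B_i ∈ M_n(K) be the matrix with row i equal to u, row i+1 equal to v, and all other rows zero. Then every non-trivial linear combination of B_1, …, B_{n−1} has rank 2. -/
/-!
Row `j` of `∑ i, λᵢ • Bᵢ` is `λⱼ • u + λⱼ₋₁ • v`, so the row space lies in `span {u, v}`. If `i₀`
is the least index with `λᵢ₀ ≠ 0`, rows `i₀` and `i₀ + 1` are `λᵢ₀ • u` and `λᵢ₀₊₁ • u + λᵢ₀ • v`,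
a triangular pair recovering `u` and `v`; hence the row space is `span {u, v}`, of dimension 2.
-/

open Module Submodule Set

theorem Submodule.span_range_eq_span_pair_of_triangular {ι K V : Type*} [DivisionRing K]
    [AddCommGroup V] [Module K V] {r : ι → V} {u v : V} (a b : ι → K)
    (hr : ∀ j, r j = a j • u + b j • v) {p q : ι} (hap : a p ≠ 0) (hbp : b p = 0)
    (hbq : b q ≠ 0) : span K (range r) = span K {u, v} := by
  have hu : u ∈ span K (range r) := by
    have : (a p)⁻¹ • r p = u := by rw [hr, hbp, zero_smul, add_zero, inv_smul_smul₀ hap]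
    exact this ▸ smul_mem _ _ (subset_span (mem_range_self p))
  have hv : v ∈ span K (range r) := by
    have : (b q)⁻¹ • (r q - a q • u) = v := by rw [hr, add_sub_cancel_left, inv_smul_smul₀ hbq]
    exact this ▸ smul_mem _ _ (sub_mem (subset_span (mem_range_self q)) (smul_mem _ _ hu))
  refine span_eq_span ?_ (insert_subset_iff.2 ⟨hu, singleton_subset_iff.2 hv⟩)
  rintro _ ⟨j, rfl⟩
  rw [hr]
  exact add_mem (smul_mem _ _ (subset_span (by simp))) (smul_mem _ _ (subset_span (by simp)))

theorem finrank_span_pair {K V : Type*} [DivisionRing K] [AddCommGroup V] [Module K V]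
    {u v : V} (huv : LinearIndependent K ![u, v]) : finrank K (span K {u, v}) = 2 := by
  rw [← Matrix.range_cons_cons_empty u v ![], finrank_span_eq_card huv, Fintype.card_fin]

/-- `∑ i, if (i : ℕ) = j then lam i else 0` is `lam j`, extended by zero outside `Fin (n - 1)`. -/
theorem Matrix.sum_smul_row_of_shifted_pair {K : Type*} [Field K] {n : ℕ} {u v : Fin n → K}
    {B : Fin (n - 1) → Matrix (Fin n) (Fin n) K}
    (hB : ∀ i : Fin (n - 1), ∀ j : Fin n,
      (B i) j = if (j : ℕ) = (i : ℕ) then u else if (j : ℕ) = (i : ℕ) + 1 then v else 0)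
    (lam : Fin (n - 1) → K) (j : Fin n) :
    (∑ i, lam i • B i) j = (∑ i : Fin (n - 1), if (i : ℕ) = (j : ℕ) then lam i else 0) • u
      + (∑ i : Fin (n - 1), if (i : ℕ) + 1 = (j : ℕ) then lam i else 0) • v := by
  ext k
  simp only [Matrix.sum_apply, Matrix.smul_apply, hB, Pi.add_apply, Finset.sum_apply,
    Pi.smul_apply, Finset.sum_smul, ← Finset.sum_add_distrib]
  refine Finset.sum_congr rfl fun i _ => ?_
  split_ifs <;> first | omega | simp

theorem nontrivial_combination_rank_two_general
    {K : Type*} [Field K] {n : ℕ}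
    (u v : Fin n → K) (huv : LinearIndependent K ![u, v])
    (B : Fin (n - 1) → Matrix (Fin n) (Fin n) K)
    (hB : ∀ i : Fin (n - 1), ∀ j : Fin n,
      (B i) j = if (j : ℕ) = (i : ℕ) then u
        else if (j : ℕ) = (i : ℕ) + 1 then v else 0) :
    ∀ lam : Fin (n - 1) → K, lam ≠ 0 → (∑ i, lam i • B i).rank = 2 := by
  intro lam hlam
  obtain ⟨i₀, hi₀ : lam i₀ ≠ 0, hmin⟩ :=
    wellFounded_lt.has_min {i | lam i ≠ 0} (Function.ne_iff.1 hlam)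
  have hap : (∑ i : Fin (n - 1), if (i : ℕ) = i₀ then lam i else 0) ≠ 0 := by
    simpa [Fin.val_inj] using hi₀
  have hbp : (∑ i : Fin (n - 1), if (i : ℕ) + 1 = i₀ then lam i else 0) = 0 :=
    Finset.sum_eq_zero fun i _ => ite_eq_right_iff.2 fun h =>
      not_not.1 fun hi => hmin i hi (Fin.lt_def.2 (by omega))
  have hbq : (∑ i : Fin (n - 1), if (i : ℕ) + 1 = i₀ + 1 then lam i else 0) ≠ 0 := by
    simpa [Fin.val_inj] using hi₀
  rw [Matrix.rank_eq_finrank_span_row, Matrix.row,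
    Submodule.span_range_eq_span_pair_of_triangular _ _
      (Matrix.sum_smul_row_of_shifted_pair hB lam) (p := ⟨i₀, by omega⟩)
      (q := ⟨i₀ + 1, by omega⟩) hap hbp hbq, finrank_span_pair huv]

/-- Over a field, given linearly independent vectors `u, v ∈ Kⁿ`, the matrices
`B i` (for `i = 0, …, n-2`) with row `i` equal to `u`, row `i+1` equal to `v`
and all other rows zero, have the property that every non-trivial linear
combination of them has rank `2`. -/
theorem nontrivial_combination_rank_two
    {K : Type*} [Field K] {n : ℕ} (hn : 2 ≤ n)
    (u v : Fin n → K) (huv : LinearIndependent K ![u, v])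
    (B : Fin (n - 1) → Matrix (Fin n) (Fin n) K)
    (hB : ∀ i : Fin (n - 1), ∀ j : Fin n,
      (B i) j = if (j : ℕ) = (i : ℕ) then u
        else if (j : ℕ) = (i : ℕ) + 1 then v else 0) :
    ∀ lam : Fin (n - 1) → K, lam ≠ 0 → (∑ i, lam i • B i).rank = 2 :=
  nontrivial_combination_rank_two_general u v huv B hB
end

section
/- Let n ≥ 1 and let K be a field in which every polynomial of degree exactly n has a root. If T : M_n(K) → M_n(K) is a linear map preserving the L-relation, then for every matrix A of rank 1, the image T(A) has rank at most 1. -/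
open Module Polynomial

section

variable {K : Type*} [Field K]

lemma Submodule.span_range_smul_eq_span_singleton {E ι : Type*} [AddCommGroup E] [Module K E]
    {w : ι → K} (hw : w ≠ 0) (y : E) :
    Submodule.span K (Set.range fun i => w i • y) = K ∙ y := by
  apply le_antisymm
  · rw [Submodule.span_le]
    rintro _ ⟨i, rfl⟩
    exact Submodule.smul_mem _ _ (Submodule.mem_span_singleton_self y)
  · obtain ⟨i, hi⟩ := Function.ne_iff.mp hw
    have hwy : w i • y ∈ Submodule.span K (Set.range fun i => w i • y) :=
      Submodule.subset_span ⟨i, rfl⟩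
    rw [Submodule.span_singleton_le_iff_mem]
    simpa only [inv_smul_smul₀ hi] using Submodule.smul_mem _ (w i)⁻¹ hwy

lemma exists_biorthogonal_pair_of_two_le_finrank {E : Type*} [AddCommGroup E] [Module K E]
    {V : Submodule K E} (hV : 2 ≤ finrank K V) :
    ∃ u₁ ∈ V, ∃ u₂ ∈ V, ∃ f g : Dual K E, f u₁ = 1 ∧ f u₂ = 0 ∧ g u₁ = 0 ∧ g u₂ = 1 := by
  have : FiniteDimensional K V := Module.finite_of_finrank_pos (by omega)
  let b := finBasis K V
  have hb : ∀ i j, b.coord i (b j) = if j = i then 1 else 0 := fun i j => by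
    simp [Finsupp.single_apply]
  obtain ⟨f, hf⟩ := LinearMap.exists_extend (b.coord ⟨0, by omega⟩)
  obtain ⟨g, hg⟩ := LinearMap.exists_extend (b.coord ⟨1, hV⟩)
  have hf' := LinearMap.congr_fun hf
  have hg' := LinearMap.congr_fun hg
  simp only [LinearMap.comp_apply, Submodule.subtype_apply] at hf' hg'
  refine ⟨b ⟨0, by omega⟩, (b _).2, b ⟨1, hV⟩, (b _).2, f, g, ?_⟩
  simp [hf', hg', hb, Fin.ext_iff]

lemma exists_smul_add_smul_apply_eq_zero {M : Type*} [AddCommGroup M] [Module K M]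
    [FiniteDimensional K M]
    (hK : ∀ p : K[X], p.degree = finrank K M → ∃ x : K, p.eval x = 0) (P Q : End K M) :
    ∃ a b : K, (a ≠ 0 ∨ b ≠ 0) ∧ ∃ v ≠ 0, a • P v + b • Q v = 0 := by
  by_cases hP : Function.Injective P
  · let e := LinearEquiv.ofBijective P ⟨hP, LinearMap.injective_iff_surjective.mp hP⟩
    let N : End K M := e.symm.toLinearMap ∘ₗ Q
    obtain ⟨μ, hμ⟩ := hK N.charpoly <| by
      rw [degree_eq_natDegree N.charpoly_monic.ne_zero, LinearMap.charpoly_natDegree]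
    obtain ⟨v, hv⟩ :=
      ((End.hasEigenvalue_iff_isRoot_charpoly N μ).mpr hμ).exists_hasEigenvector
    have hQv : Q v = μ • P v := by
      rw [← map_smul, ← hv.apply_eq_smul]
      exact (e.apply_symm_apply (Q v)).symm
    exact ⟨μ, -1, Or.inr (by simp), v, hv.2, by simp [hQv]⟩
  · obtain ⟨v, hv, hPv⟩ : ∃ v ≠ 0, P v = 0 := by
      simpa [injective_iff_map_eq_zero, not_forall, and_comm] using hP
    exact ⟨1, 0, Or.inl one_ne_zero, v, hv, by simp [hPv]⟩

theorem finrank_le_one_of_forall_span_range_eq {E : Type*} [AddCommGroup E] [Module K E] {n : ℕ}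
    (hK : ∀ p : K[X], p.degree = n → ∃ x : K, p.eval x = 0)
    (Φ : (Fin n → K) →ₗ[K] Fin n → E) (V : Submodule K E)
    (hΦ : ∀ w ≠ 0, Submodule.span K (Set.range (Φ w)) = V) : finrank K V ≤ 1 := by
  by_contra! hV
  obtain ⟨u₁, hu₁, u₂, hu₂, f, g, hf₁, hf₂, hg₁, hg₂⟩ :=
    exists_biorthogonal_pair_of_two_le_finrank (Nat.succ_le_of_lt hV)
  obtain ⟨a, b, hab, v, hv, habv⟩ := exists_smul_add_smul_apply_eq_zero
    (by simpa using hK) (f.compLeft (Fin n) ∘ₗ Φ) (g.compLeft (Fin n) ∘ₗ Φ)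
  have hV_le : V ≤ LinearMap.ker (a • f + b • g) := by
    rw [← hΦ v hv, Submodule.span_le]
    rintro _ ⟨i, rfl⟩
    simpa using congr_fun habv i
  exact hab.elim (· (by simpa [hf₁, hg₁] using hV_le hu₁))
    (· (by simpa [hf₂, hg₂] using hV_le hu₂))

end

theorem L_preserver_rank_one_to_rank_le_one_general
    {K : Type*} [Field K] {n : ℕ}
    (hK : ∀ p : Polynomial K, p.degree = n → ∃ x : K, p.eval x = 0)
    (T : Matrix (Fin n) (Fin n) K →ₗ[K] Matrix (Fin n) (Fin n) K)
    (hL : ∀ A B : Matrix (Fin n) (Fin n) K,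
      rowSpace A = rowSpace B → rowSpace (T A) = rowSpace (T B)) :
    ∀ A : Matrix (Fin n) (Fin n) K, A.rank = 1 → (T A).rank ≤ 1 := by
  intro A hA
  obtain ⟨y, hy⟩ := ((rowSpace A).finrank_le_one_iff_isPrincipal.mp
    (Matrix.rank_eq_finrank_span_row A ▸ hA.le)).principal
  let Φ := T ∘ₗ (LinearMap.toSpanSingleton K (Fin n → K) y).compLeft (Fin n)
  have hΦ : ∀ w ≠ 0, rowSpace (Φ w) = rowSpace (T A) := fun w hw =>
    hL _ _ ((Submodule.span_range_smul_eq_span_singleton hw y).trans hy.symm)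
  rw [Matrix.rank_eq_finrank_span_row]
  exact finrank_le_one_of_forall_span_range_eq hK Φ _ hΦ

/-- Over a field in which every polynomial of degree exactly `n` has a root, a
linear `L`-preserver on `M_n(K)` maps every rank-one matrix to a matrix of rank
at most one. -/
theorem L_preserver_rank_one_to_rank_le_one
    {K : Type*} [Field K] {n : ℕ} (hn : 1 ≤ n)
    (hK : ∀ p : Polynomial K, p.degree = n → ∃ x : K, p.eval x = 0)
    (T : Matrix (Fin n) (Fin n) K →ₗ[K] Matrix (Fin n) (Fin n) K)
    (hL : ∀ A B : Matrix (Fin n) (Fin n) K,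
      rowSpace A = rowSpace B → rowSpace (T A) = rowSpace (T B)) :
    ∀ A : Matrix (Fin n) (Fin n) K, A.rank = 1 → (T A).rank ≤ 1 :=
  L_preserver_rank_one_to_rank_le_one_general hK T hL
end

section
/- Let K be a field and T : M_n(K) → M_n(K) a linear map preserving the L-relation. Then the kernel of T equals ρ(V_T) = {A ∈ M_n(K) : every row of A lies in V_T}, where V_T = {v ∈ Kⁿ : v is a row of some matrix in ker(T)}. -/
namespace Matrix

variable {R : Type*} [CommRing R] {ι : Type*} [Fintype ι] [DecidableEq ι]

theorem single_mem_adjoin_isUnit_of_ne {i j : ι} (hij : i ≠ j) (c : R) :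
    single i j c ∈ Algebra.adjoin R {Y : Matrix ι ι R | IsUnit Y} := by
  have htrans : IsUnit (transvection i j c) := by
    rw [isUnit_iff_isUnit_det, det_transvection_of_ne i j hij]
    exact isUnit_one
  have hsingle : single i j c = transvection i j c - 1 := by
    rw [transvection, add_sub_cancel_left]
  rw [hsingle]
  exact sub_mem (Algebra.subset_adjoin htrans) (Algebra.subset_adjoin isUnit_one)

theorem single_mem_adjoin_isUnit (i j : ι) (c : R) :
    single i j c ∈ Algebra.adjoin R {Y : Matrix ι ι R | IsUnit Y} := by
  rcases ne_or_eq i j with hij | rfl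
  · exact single_mem_adjoin_isUnit_of_ne hij c
  by_cases hk : ∃ k, k ≠ i
  · obtain ⟨k, hki⟩ := hk
    rw [← mul_one c, ← single_mul_single_same c i k i]
    exact mul_mem (single_mem_adjoin_isUnit_of_ne hki.symm c)
      (single_mem_adjoin_isUnit_of_ne hki 1)
  · simp only [not_exists, not_ne_iff] at hk
    have hscalar : single i i c = algebraMap R (Matrix ι ι R) c := by
      ext a b
      rw [hk a, hk b, algebraMap_eq_diagonal]
      simp
    rw [hscalar]
    exact Subalgebra.algebraMap_mem _ c

theorem adjoin_isUnit_eq_top : Algebra.adjoin R {Y : Matrix ι ι R | IsUnit Y} = ⊤ := by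
  refine eq_top_iff.mpr fun M _ => ?_
  rw [matrix_eq_sum_single M]
  exact sum_mem fun i _ => sum_mem fun j _ => single_mem_adjoin_isUnit i j (M i j)

end Matrix

section RowSpace

variable {K : Type*} [Field K] {n : ℕ}

theorem rowSpace_eq_bot_iff {A : Matrix (Fin n) (Fin n) K} : rowSpace A = ⊥ ↔ A = 0 := by
  rw [rowSpace, Submodule.span_eq_bot]
  constructor
  · exact fun h => funext fun i => h _ ⟨i, rfl⟩
  · rintro rfl _ ⟨i, rfl⟩
    rfl

theorem rowSpace_mul_le (Y B : Matrix (Fin n) (Fin n) K) : rowSpace (Y * B) ≤ rowSpace B := by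
  rw [rowSpace, Submodule.span_le]
  rintro _ ⟨r, rfl⟩
  rw [Matrix.mul_apply_eq_vecMul, Matrix.vecMul_eq_sum]
  exact Submodule.sum_mem _ fun k _ => Submodule.smul_mem _ _ (Submodule.subset_span ⟨k, rfl⟩)

theorem rowSpace_mul_of_isUnit {Y : Matrix (Fin n) (Fin n) K} (hY : IsUnit Y)
    (B : Matrix (Fin n) (Fin n) K) : rowSpace (Y * B) = rowSpace B := by
  obtain ⟨U, rfl⟩ := hY
  refine le_antisymm (rowSpace_mul_le _ B) ?_
  have h := rowSpace_mul_le (↑U⁻¹ : Matrix (Fin n) (Fin n) K)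
    ((U : Matrix (Fin n) (Fin n) K) * B)
  rwa [← mul_assoc, U.inv_mul, one_mul] at h

end RowSpace

section Preserver

variable {K : Type*} [Field K] {n : ℕ}
  {T : Matrix (Fin n) (Fin n) K →ₗ[K] Matrix (Fin n) (Fin n) K}

theorem map_eq_zero_of_rowSpace_eq
    (hL : ∀ A B, rowSpace A = rowSpace B → rowSpace (T A) = rowSpace (T B))
    {B C : Matrix (Fin n) (Fin n) K} (hB : T B = 0) (h : rowSpace C = rowSpace B) : T C = 0 := by
  rw [← rowSpace_eq_bot_iff, hL C B h, hB, rowSpace_eq_bot_iff]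

theorem map_mul_eq_zero
    (hL : ∀ A B, rowSpace A = rowSpace B → rowSpace (T A) = rowSpace (T B))
    (Y : Matrix (Fin n) (Fin n) K) {B : Matrix (Fin n) (Fin n) K} (hB : T B = 0) :
    T (Y * B) = 0 := by
  have hY : Y ∈ Algebra.adjoin K {Y : Matrix (Fin n) (Fin n) K | IsUnit Y} :=
    Matrix.adjoin_isUnit_eq_top (R := K) (ι := Fin n) ▸ Algebra.mem_top
  induction hY using Algebra.adjoin_induction generalizing B with
  | mem U hU => exact map_eq_zero_of_rowSpace_eq hL hB (rowSpace_mul_of_isUnit hU B)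
  | algebraMap c =>
    rw [Algebra.algebraMap_eq_smul_one, smul_mul_assoc, one_mul, map_smul, hB, smul_zero]
  | add Y Z _ _ hY hZ => rw [add_mul, map_add, hY hB, hZ hB, add_zero]
  | mul Y Z _ _ hY hZ => rw [mul_assoc]; exact hY (hZ hB)

end Preserver

/-- For a linear `L`-preserver `T` on `M_n(K)`, the kernel of `T` equals
`ρ(V_T)`, the set of matrices all of whose rows lie in
`V_T = {v : v is a row of some matrix in ker T}`. -/
theorem ker_eq_rho_VT
    {K : Type*} [Field K] {n : ℕ}
    (T : Matrix (Fin n) (Fin n) K →ₗ[K] Matrix (Fin n) (Fin n) K)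
    (hL : ∀ A B : Matrix (Fin n) (Fin n) K,
      rowSpace A = rowSpace B → rowSpace (T A) = rowSpace (T B)) :
    ∀ A : Matrix (Fin n) (Fin n) K,
      T A = 0 ↔ ∀ i : Fin n,
        A i ∈ {v : Fin n → K |
          ∃ B : Matrix (Fin n) (Fin n) K, T B = 0 ∧ ∃ j : Fin n, B j = v} := by
  intro A
  refine ⟨fun hA i => ⟨A, hA, i, rfl⟩, fun h => ?_⟩
  choose B hB j hj using h
  have hA : A = ∑ i, Matrix.single i (j i) 1 * B i := by
    ext r k
    rw [Matrix.sum_apply, Finset.sum_eq_single r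
      (fun i _ hi => Matrix.single_mul_apply_of_ne _ _ _ _ _ (Ne.symm hi) _) (by simp),
      Matrix.single_mul_apply_same, one_mul, hj]
  rw [hA, map_sum]
  exact Finset.sum_eq_zero fun i _ => map_mul_eq_zero hL _ (hB i)
end

section
/- Let n ≥ 2, K a field, and suppose C_1, …, C_n ∈ M_n(K) form a basis of a subspace of M_n(K) whose non-zero elements all lie in a single L-class. Then the linear map T : M_n(K) → M_n(K) defined by T(A) = Σᵢ a_{i1} C_i (where a_{i1} is the (i,1) entry of A) preserves the L-relation. -/
/-- If `C₁, …, Cₙ` form a basis of a subspace of `M_n(K)` whose nonzero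
elements all lie in a single `L`-class, then the linear map
`T(A) = Σᵢ a_{i1} Cᵢ` preserves the `L`-relation. -/
theorem column_extraction_map_preserves_L
    {K : Type*} [Field K] {n : ℕ} (hn : 2 ≤ n)
    (C : Fin n → Matrix (Fin n) (Fin n) K)
    (hind : LinearIndependent K C)
    (hclass : ∀ A ∈ Submodule.span K (Set.range C),
      ∀ B ∈ Submodule.span K (Set.range C),
        A ≠ 0 → B ≠ 0 → rowSpace A = rowSpace B)
    (T : Matrix (Fin n) (Fin n) K →ₗ[K] Matrix (Fin n) (Fin n) K)
    (hT : ∀ A : Matrix (Fin n) (Fin n) K, T A = ∑ i, A i ⟨0, by omega⟩ • C i) :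
    ∀ A B : Matrix (Fin n) (Fin n) K,
      rowSpace A = rowSpace B → rowSpace (T A) = rowSpace (T B) := by
  intro A B hAB
  set j : Fin n := ⟨0, by omega⟩ with hj
  have key : ∀ M N : Matrix (Fin n) (Fin n) K, rowSpace M = rowSpace N →
      (∀ i, M i j = 0) → (∀ i, N i j = 0) := by
    intro M N h hM i
    have hsub : rowSpace M ≤
        LinearMap.ker (LinearMap.proj (R := K) (φ := fun _ : Fin n => K) j) := by
      rw [rowSpace, Submodule.span_le]
      rintro _ ⟨k, rfl⟩
      simp [LinearMap.mem_ker, hM k]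
    have hmem : N i ∈ rowSpace N := Submodule.subset_span ⟨i, rfl⟩
    rw [← h] at hmem
    exact hsub hmem
  have mem : ∀ M : Matrix (Fin n) (Fin n) K, T M ∈ Submodule.span K (Set.range C) := by
    intro M
    rw [hT]
    exact Submodule.sum_mem _ fun i _ =>
      Submodule.smul_mem _ _ (Submodule.subset_span ⟨i, rfl⟩)
  have zero_iff : ∀ M : Matrix (Fin n) (Fin n) K, T M = 0 ↔ ∀ i, M i j = 0 := by
    intro M
    rw [hT]
    constructor
    · intro h i
      exact Fintype.linearIndependent_iff.mp hind _ h i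
    · intro h
      simp [h]
  by_cases hA0 : T A = 0
  · have hB0 : T B = 0 := by
      rw [zero_iff] at hA0 ⊢
      exact key A B hAB hA0
    rw [hA0, hB0]
  · have hB0 : T B ≠ 0 := by
      intro h
      apply hA0
      rw [zero_iff] at h ⊢
      exact key B A hAB.symm h
    exact hclass _ (mem A) _ (mem B) hA0 hB0
end

section
/- The linear map T : M_2(ℝ) → M_2(ℝ) sending the matrix with entries (a, b; c, d) to the matrix with entries (a, a−c; c, a+c) preserves Green's L-relation and Green's H-relation, but is not of the form A ↦ PAX for any invertible P and matrix X. -/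
/-- The column space of a square matrix: the span of its columns. -/
def colSpace {K : Type*} [Field K] {n : ℕ} (A : Matrix (Fin n) (Fin n) K) :
    Submodule K (Fin n → K) :=
  Submodule.span K (Set.range A.transpose)

/-!
The image of `T` consists of `0` and invertible matrices, since `det (T A) = a² + c²`, and
`T A = 0` exactly when the first column `(a, c)` of `A` vanishes. Matrices with the same row
space have the same zero columns, and all invertible matrices share the row space and column
space `⊤`; so `T` preserves both relations. On the other hand `T` sends the singular matrix
`(0, 0; 1, 0)` to a matrix of determinant `1`, which `A ↦ P * A * X` never does.
-/

section SpanOfRows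

variable {K : Type*} [Field K] {n : ℕ}

theorem rowSpace_eq_top_of_det_ne_zero {A : Matrix (Fin n) (Fin n) K} (h : A.det ≠ 0) :
    rowSpace A = ⊤ := by
  rw [rowSpace, show Set.range A = Set.range A.row from rfl, ← range_vecMulLinear,
    LinearMap.range_eq_top]
  exact Matrix.vecMul_surjective_iff_isUnit.mpr ((Matrix.isUnit_iff_isUnit_det A).mpr h.isUnit)

theorem colSpace_eq_top_of_det_ne_zero {A : Matrix (Fin n) (Fin n) K} (h : A.det ≠ 0) :
    colSpace A = ⊤ :=
  rowSpace_eq_top_of_det_ne_zero (A := A.transpose) (by rwa [Matrix.det_transpose])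

theorem col_eq_zero_iff_rowSpace_le_ker_proj {A : Matrix (Fin n) (Fin n) K} {j : Fin n} :
    (∀ i, A i j = 0) ↔ rowSpace A ≤ LinearMap.ker (LinearMap.proj j) := by
  rw [rowSpace, Submodule.span_le, show Set.range A = Set.range A.row from rfl,
    Set.range_subset_iff]
  simp

theorem col_eq_zero_iff_of_rowSpace_eq {A B : Matrix (Fin n) (Fin n) K}
    (h : rowSpace A = rowSpace B) (j : Fin n) : (∀ i, A i j = 0) ↔ ∀ i, B i j = 0 := by
  rw [col_eq_zero_iff_rowSpace_le_ker_proj, col_eq_zero_iff_rowSpace_le_ker_proj, h]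

end SpanOfRows

section FirstColumnMap

variable {K : Type*} [Field K]

def firstColumnMap (A : Matrix (Fin 2) (Fin 2) K) : Matrix (Fin 2) (Fin 2) K :=
  !![A 0 0, A 0 0 - A 1 0; A 1 0, A 0 0 + A 1 0]

theorem det_firstColumnMap (A : Matrix (Fin 2) (Fin 2) K) :
    (firstColumnMap A).det = A 0 0 ^ 2 + A 1 0 ^ 2 := by
  rw [firstColumnMap, Matrix.det_fin_two_of]
  ring

theorem firstColumnMap_eq_zero {A : Matrix (Fin 2) (Fin 2) K} (h : ∀ i, A i 0 = 0) :
    firstColumnMap A = 0 := by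
  ext i j
  fin_cases i <;> fin_cases j <;> simp [firstColumnMap, h]

theorem det_firstColumnMap_ne_zero [LinearOrder K] [IsStrictOrderedRing K]
    {A : Matrix (Fin 2) (Fin 2) K} (h : ¬ ∀ i, A i 0 = 0) :
    (firstColumnMap A).det ≠ 0 := by
  rw [det_firstColumnMap, sq, sq]
  contrapose! h
  simpa [Fin.forall_fin_two] using mul_self_add_mul_self_eq_zero.mp h

theorem rowSpace_eq_and_colSpace_eq_firstColumnMap [LinearOrder K] [IsStrictOrderedRing K]
    {A B : Matrix (Fin 2) (Fin 2) K}
    (h : rowSpace A = rowSpace B) :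
    rowSpace (firstColumnMap A) = rowSpace (firstColumnMap B) ∧
      colSpace (firstColumnMap A) = colSpace (firstColumnMap B) := by
  by_cases hA : ∀ i, A i 0 = 0
  · have hB : ∀ i, B i 0 = 0 := (col_eq_zero_iff_of_rowSpace_eq h 0).mp hA
    rw [firstColumnMap_eq_zero hA, firstColumnMap_eq_zero hB]
    exact ⟨rfl, rfl⟩
  · have hB : ¬ ∀ i, B i 0 = 0 := mt (col_eq_zero_iff_of_rowSpace_eq h 0).mpr hA
    have dA := det_firstColumnMap_ne_zero hA
    have dB := det_firstColumnMap_ne_zero hB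
    rw [rowSpace_eq_top_of_det_ne_zero dA, rowSpace_eq_top_of_det_ne_zero dB,
      colSpace_eq_top_of_det_ne_zero dA, colSpace_eq_top_of_det_ne_zero dB]
    exact ⟨rfl, rfl⟩

theorem firstColumnMap_ne_mul_mul (P X : Matrix (Fin 2) (Fin 2) K) :
    ∃ A, firstColumnMap A ≠ P * A * X := by
  refine ⟨!![0, 0; 1, 0], fun h => ?_⟩
  have := congrArg Matrix.det h
  rw [det_firstColumnMap, Matrix.det_mul, Matrix.det_mul, Matrix.det_fin_two_of] at this
  norm_num at this

end FirstColumnMap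

/-- The linear map `(a, b; c, d) ↦ (a, a−c; c, a+c)` on `M_2(ℝ)` preserves
Green's `L`- and `H`-relations but is not of the form `A ↦ P * A * X` with `P`
invertible. -/
theorem concrete_L_H_preserver_not_standard
    (T : Matrix (Fin 2) (Fin 2) ℝ →ₗ[ℝ] Matrix (Fin 2) (Fin 2) ℝ)
    (hT : ∀ A : Matrix (Fin 2) (Fin 2) ℝ,
      T A = !![A 0 0, A 0 0 - A 1 0; A 1 0, A 0 0 + A 1 0]) :
    (∀ A B : Matrix (Fin 2) (Fin 2) ℝ,
        rowSpace A = rowSpace B → rowSpace (T A) = rowSpace (T B)) ∧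
    (∀ A B : Matrix (Fin 2) (Fin 2) ℝ,
        rowSpace A = rowSpace B ∧ colSpace A = colSpace B →
          rowSpace (T A) = rowSpace (T B) ∧ colSpace (T A) = colSpace (T B)) ∧
    ¬ ∃ (P X : Matrix (Fin 2) (Fin 2) ℝ), IsUnit P ∧
        ∀ A : Matrix (Fin 2) (Fin 2) ℝ, T A = P * A * X := by
  have hT' : ⇑T = firstColumnMap := funext hT
  rw [hT']
  refine ⟨fun A B h => (rowSpace_eq_and_colSpace_eq_firstColumnMap h).1,
    fun A B h => rowSpace_eq_and_colSpace_eq_firstColumnMap h.1, ?_⟩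
  rintro ⟨P, X, -, hPX⟩
  obtain ⟨A, hA⟩ := firstColumnMap_ne_mul_mul P X
  exact hA (hPX A)
end

section
/- Let K be any field and T : M_n(K) → M_n(K) a linear map preserving Green's J-relation (i.e., rk(A) = rk(B) implies rk(T(A)) = rk(T(B))). Then T is either the zero map or a bijection. -/
/-!
If `T` kills a nonzero matrix `Y`, it kills every matrix of rank `rk Y`, in particular
`Y * (1 + E_ij)` for `i ≠ j` (a transvection does not change the rank). Choosing `i` with column
`i` of `Y` nonzero, `T` then kills the rank-one difference `Y * E_ij` (for `n = 1`, `Y` itself has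
rank one), hence every rank-one matrix, hence every matrix unit, so `T = 0`. Thus a nonzero `T` is injective, and bijective by
finite-dimensionality.
-/

open Matrix

namespace Matrix

variable {K : Type*} [Field K] {m n : Type*} [Fintype n]

theorem rank_eq_zero_iff {A : Matrix m n K} : A.rank = 0 ↔ A = 0 := by
  have := FiniteDimensional.span_of_finite K (Set.finite_range A.col)
  rw [rank_eq_finrank_span_cols, Submodule.finrank_eq_zero, Submodule.span_eq_bot]
  simp only [Set.mem_range, forall_exists_index, forall_apply_eq_imp_iff]
  exact ⟨fun h => ext fun i j => congrFun (h j) i, fun h _ => h ▸ rfl⟩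

variable [DecidableEq n]

theorem rank_single_one (i j : n) : (single i j (1 : K)).rank = 1 := by
  have hle : (single i j (1 : K)).rank ≤ 1 := by
    rw [single_eq_single_vecMulVec_single]
    exact rank_vecMulVec_le _ _
  have hne : (single i j (1 : K)).rank ≠ 0 := by
    rw [Ne, rank_eq_zero_iff]
    exact fun h => one_ne_zero (α := K) (by simpa using congrFun (congrFun h i) j)
  omega

theorem exists_rank_eq_and_rank_sub_eq_one [Nontrivial n] {Y : Matrix n n K} (hY : Y ≠ 0) :
    ∃ B : Matrix n n K, B.rank = Y.rank ∧ (B - Y).rank = 1 := by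
  obtain ⟨k, i, hki⟩ : ∃ k i, Y k i ≠ 0 := by
    by_contra! h
    exact hY (ext h)
  obtain ⟨j, hji⟩ := exists_ne i
  refine ⟨Y * transvection i j 1, ?_, ?_⟩
  · exact rank_mul_eq_left_of_isUnit_det _ _ (by simp [det_transvection_of_ne i j hji.symm])
  · have hsub : Y * transvection i j 1 - Y = Y * single i j 1 := by
      rw [transvection, mul_add, mul_one, add_sub_cancel_left]
    have hle : (Y * single i j (1 : K)).rank ≤ 1 :=
      (rank_mul_le_right _ _).trans (rank_single_one i j).le
    have hne : (Y * single i j (1 : K)).rank ≠ 0 := by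
      rw [Ne, rank_eq_zero_iff]
      exact fun h => hki (by simpa using congrFun (congrFun h k) j)
    rw [hsub]
    omega

end Matrix

section RankClassPreserver

variable {K : Type*} [Field K] {n : Type*} [Fintype n] {T : Matrix n n K →ₗ[K] Matrix n n K}

/-- Preservation of Green's `J`-relation, which on `M_n(K)` is equality of rank. -/
def PreservesRankEq (T : Matrix n n K →ₗ[K] Matrix n n K) : Prop :=
  ∀ A B : Matrix n n K, A.rank = B.rank → (T A).rank = (T B).rank

theorem PreservesRankEq.map_eq_zero_of_rank_eq (hT : PreservesRankEq T) {A B : Matrix n n K}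
    (hA : T A = 0) (hAB : A.rank = B.rank) : T B = 0 := by
  rw [← Matrix.rank_eq_zero_iff, ← hT A B hAB, hA, rank_zero]

variable [DecidableEq n]

theorem PreservesRankEq.exists_rank_eq_one_map_eq_zero (hT : PreservesRankEq T)
    {Y : Matrix n n K} (hY : Y ≠ 0) (hTY : T Y = 0) : ∃ E : Matrix n n K, E.rank = 1 ∧ T E = 0 := by
  cases subsingleton_or_nontrivial n with
  | inl _ =>
    refine ⟨Y, ?_, hTY⟩
    have hle : Y.rank ≤ 1 :=
      Y.rank_le_card_width.trans (Fintype.card_le_one_iff_subsingleton.2 ‹_›)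
    have hne : Y.rank ≠ 0 := by rwa [Ne, Matrix.rank_eq_zero_iff]
    omega
  | inr _ =>
    obtain ⟨B, hBY, hBY1⟩ := exists_rank_eq_and_rank_sub_eq_one hY
    refine ⟨B - Y, hBY1, ?_⟩
    rw [map_sub, hT.map_eq_zero_of_rank_eq hTY hBY.symm, hTY, sub_zero]

theorem PreservesRankEq.eq_zero_of_rank_eq_one_map_eq_zero (hT : PreservesRankEq T)
    {E : Matrix n n K} (hE : E.rank = 1) (hTE : T E = 0) : T = 0 := by
  refine ext_linearMap K fun i j => LinearMap.ext fun c => ?_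
  have hsingle : T (single i j 1) = 0 :=
    hT.map_eq_zero_of_rank_eq hTE (hE.trans (rank_single_one i j).symm)
  have hsmul : single i j c = c • single i j 1 := by rw [smul_single, smul_eq_mul, mul_one]
  rw [LinearMap.comp_apply, singleLinearMap_apply, hsmul, map_smul, hsingle, smul_zero,
    LinearMap.zero_comp, LinearMap.zero_apply]

theorem PreservesRankEq.injective_of_ne_zero (hT : PreservesRankEq T) (hT0 : T ≠ 0) :
    Function.Injective T := by
  refine (injective_iff_map_eq_zero T).2 fun Y hTY => ?_
  by_contra hY
  obtain ⟨E, hE, hTE⟩ := hT.exists_rank_eq_one_map_eq_zero hY hTY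
  exact hT0 (hT.eq_zero_of_rank_eq_one_map_eq_zero hE hTE)

end RankClassPreserver

/-- A linear map on `M_n(K)` preserving Green's `J`-relation (equality of
ranks) is either the zero map or a bijection. -/
theorem J_preserver_zero_or_bijective
    {K : Type*} [Field K] {n : ℕ}
    (T : Matrix (Fin n) (Fin n) K →ₗ[K] Matrix (Fin n) (Fin n) K)
    (hJ : ∀ A B : Matrix (Fin n) (Fin n) K,
      A.rank = B.rank → (T A).rank = (T B).rank) :
    T = 0 ∨ Function.Bijective T := by
  refine or_iff_not_imp_left.2 fun hT0 => ?_
  have hinj : Function.Injective T := PreservesRankEq.injective_of_ne_zero hJ hT0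
  exact ⟨hinj, LinearMap.injective_iff_surjective.1 hinj⟩
end
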